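/- For the tridiagonal matrix X_s, letting d_s = det(X_s), one has d_1 = 1/2, d_2 = ξ_1², and d_s = ξ_{s-1}² d_{s-2} for s ≥ 3. In particular det(X_s) > 0 for all s ≥ 1. -/
import Mathlib

open scoped Matrix

noncomputable def xi (j : ℕ) : ℝ := 1 / (2 * Real.sqrt (4 * (j : ℝ) ^ 2 - 1))

noncomputable def XMat (s : ℕ) : Matrix (Fin s) (Fin s) ℝ :=
  Matrix.of fun i j =>
    if (i : ℕ) = 0 ∧ (j : ℕ) = 0 then 1/2
    else if (i : ℕ) = (j : ℕ) + 1 then xi ((j : ℕ) + 1)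
    else if (j : ℕ) = (i : ℕ) + 1 then -xi (j : ℕ)
    else 0

noncomputable def xf (i j : ℕ) : ℝ :=
  if i = 0 ∧ j = 0 then 1/2
  else if i = j + 1 then xi (j + 1)
  else if j = i + 1 then -xi j
  else 0

lemma XMat_apply {s : ℕ} (i j : Fin s) : XMat s i j = xf (i : ℕ) (j : ℕ) := rfl

lemma xi_pos {j : ℕ} (hj : 1 ≤ j) : 0 < xi j := by
  have h1 : (1:ℝ) ≤ (j:ℝ) := by exact_mod_cast hj
  have h : (0:ℝ) < 4 * (j:ℝ)^2 - 1 := by nlinarith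
  have := Real.sqrt_pos.mpr h
  unfold xi; positivity

lemma succAbove_val {m : ℕ} (p : Fin (m+1)) (k : Fin m) :
    ((p.succAbove k : Fin (m+1)) : ℕ) = if (k:ℕ) < (p:ℕ) then (k:ℕ) else (k:ℕ)+1 := by
  rcases lt_or_ge ((k:ℕ)) ((p:ℕ)) with h | h
  · rw [Fin.succAbove_of_castSucc_lt p k (by simpa [Fin.lt_def] using h)]
    simp [h]
  · rw [Fin.succAbove_of_le_castSucc p k (by simpa [Fin.le_def] using h)]
    simp [not_lt.mpr h]

lemma det1 : (XMat 1).det = 1/2 := by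
  rw [Matrix.det_fin_one, XMat_apply]
  norm_num [xf]

lemma det2 : (XMat 2).det = xi 1 ^ 2 := by
  rw [Matrix.det_fin_two]
  simp only [XMat_apply]
  norm_num [xf]
  ring

lemma key (n : ℕ) : (XMat (n+3)).det = xi (n+2) ^ 2 * (XMat (n+1)).det := by
  set p : Fin (n+3) := ⟨n+1, by omega⟩ with hp
  rw [Matrix.det_succ_row (XMat (n+3)) (Fin.last (n+2))]
  rw [Fintype.sum_eq_single p (by
    intro b hb
    have hbv : (b:ℕ) ≠ n+1 := fun h => hb (Fin.ext h)
    have hb2 : (b:ℕ) < n+3 := b.isLt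
    have hz : XMat (n+3) (Fin.last (n+2)) b = 0 := by
      rw [XMat_apply]
      unfold xf
      simp only [Fin.val_last]
      split_ifs <;> first | rfl | (exfalso; omega) | simp_all
    rw [hz]; ring)]
  -- outer entry
  have he1 : XMat (n+3) (Fin.last (n+2)) p = xi (n+2) := by
    rw [XMat_apply]; unfold xf
    simp only [Fin.val_last, hp]
    norm_num
  set B := (XMat (n+3)).submatrix (Fin.last (n+2)).succAbove p.succAbove with hB
  -- inner expansion along last column of B
  have hBdet : B.det = - xi (n+2) * (XMat (n+1)).det := by
    rw [Matrix.det_succ_column B (Fin.last (n+1))]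
    rw [Fintype.sum_eq_single (Fin.last (n+1)) (by
      intro b hb
      have hbv : (b:ℕ) ≠ n+1 := fun h => hb (Fin.ext (by simpa using h))
      have hz : B b (Fin.last (n+1)) = 0 := by
        rw [hB, Matrix.submatrix_apply, XMat_apply]
        have hr : (((Fin.last (n+2)).succAbove b : Fin (n+3)) : ℕ) = (b:ℕ) := by
          rw [succAbove_val]; have := b.isLt; simp only [Fin.val_last]; split_ifs <;> omega
        have hc : ((p.succAbove (Fin.last (n+1)) : Fin (n+3)) : ℕ) = n+2 := by
          have hpv : (p:ℕ) = n+1 := rfl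
          rw [succAbove_val]
          simp only [Fin.val_last, hpv]
          split_ifs <;> omega
        rw [hr, hc]
        unfold xf
        have := b.isLt
        split_ifs <;> first | rfl | (exfalso; omega) | simp_all
      rw [hz]; ring)]
    have he2 : B (Fin.last (n+1)) (Fin.last (n+1)) = - xi (n+2) := by
      rw [hB, Matrix.submatrix_apply, XMat_apply]
      have hr : (((Fin.last (n+2)).succAbove (Fin.last (n+1)) : Fin (n+3)) : ℕ) = n+1 := by
        rw [succAbove_val]; simp only [Fin.val_last]; split_ifs <;> omega
      have hc : ((p.succAbove (Fin.last (n+1)) : Fin (n+3)) : ℕ) = n+2 := by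
        have hpv : (p:ℕ) = n+1 := rfl
        rw [succAbove_val]
        simp only [Fin.val_last, hpv]
        split_ifs <;> omega
      rw [hr, hc]
      unfold xf
      norm_num
    have hC : B.submatrix (Fin.last (n+1)).succAbove (Fin.last (n+1)).succAbove
        = XMat (n+1) := by
      ext i k
      rw [Matrix.submatrix_apply, hB, Matrix.submatrix_apply, XMat_apply, XMat_apply]
      have hik := i.isLt
      have hkk := k.isLt
      have hr1 : (((Fin.last (n+1)).succAbove i : Fin (n+2)) : ℕ) = (i:ℕ) := by
        rw [succAbove_val]; simp only [Fin.val_last]; split_ifs <;> omega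
      have hr2 : (((Fin.last (n+2)).succAbove ((Fin.last (n+1)).succAbove i) : Fin (n+3)) : ℕ)
          = (i:ℕ) := by
        rw [succAbove_val, hr1]; simp only [Fin.val_last]; split_ifs <;> omega
      have hc1 : (((Fin.last (n+1)).succAbove k : Fin (n+2)) : ℕ) = (k:ℕ) := by
        rw [succAbove_val]; simp only [Fin.val_last]; split_ifs <;> omega
      have hc2 : ((p.succAbove ((Fin.last (n+1)).succAbove k) : Fin (n+3)) : ℕ) = (k:ℕ) := by
        have hpv : (p:ℕ) = n+1 := rfl
        rw [succAbove_val, hc1]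
        simp only [hpv]
        split_ifs <;> omega
      rw [hr2, hc2]
    rw [he2, hC]
    have : ((Fin.last (n+1) : Fin (n+2)) : ℕ) + ((Fin.last (n+1) : Fin (n+2)) : ℕ) = 2*(n+1) := by
      simp only [Fin.val_last]; ring
    rw [this]
    have : ((-1:ℝ)) ^ (2*(n+1)) = 1 := by
      rw [pow_mul]; norm_num
    rw [this]; ring
  rw [he1, hBdet]
  have hsg : ((Fin.last (n+2) : Fin (n+3)) : ℕ) + ((p : Fin (n+3)) : ℕ) = 2*(n+1)+1 := by
    simp only [Fin.val_last, hp]; omega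
  rw [hsg]
  have : ((-1:ℝ)) ^ (2*(n+1)+1) = -1 := by
    rw [pow_succ, pow_mul]; norm_num
  rw [this]; ring

/-- Determinant recursion for `Xₛ`: `d₁ = 1/2`, `d₂ = ξ₁²`,
`dₛ = ξ_{s-1}² d_{s-2}` for `s ≥ 3`; in particular `det Xₛ > 0` for `s ≥ 1`. -/
theorem stmt13 :
    (XMat 1).det = 1/2 ∧
    (XMat 2).det = xi 1 ^ 2 ∧
    (∀ s : ℕ, 3 ≤ s → (XMat s).det = xi (s-1) ^ 2 * (XMat (s-2)).det) ∧
    (∀ s : ℕ, 1 ≤ s → 0 < (XMat s).det) := by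
  have hrec : ∀ s : ℕ, 3 ≤ s → (XMat s).det = xi (s-1) ^ 2 * (XMat (s-2)).det := by
    intro s hs
    obtain ⟨n, rfl⟩ : ∃ n, s = n + 3 := ⟨s - 3, by omega⟩
    have h1 : n + 3 - 1 = n + 2 := by omega
    have h2 : n + 3 - 2 = n + 1 := by omega
    rw [h1, h2, key]
  refine ⟨det1, det2, hrec, ?_⟩
  intro s
  induction s using Nat.strong_induction_on with
  | _ s ih =>
    intro hs
    match s, hs with
    | 1, _ => rw [det1]; norm_num
    | 2, _ => rw [det2]; exact pow_pos (xi_pos le_rfl) 2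
    | (n+3), _ =>
      rw [key n]
      exact mul_pos (pow_pos (xi_pos (by omega)) 2) (ih (n+1) (by omega) (by omega))
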